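/- The set of periodic points of T is dense in L^p(0,∞); consequently T is chaotic. -/

import Mathlib

/-!
The operator `T` has the right inverse `S`, `(S x)(t) = x(t - a) / w(t - a)` for `t > a` and `0`
otherwise, of norm at most `1 / m < 1`, while `T ^ n` kills every function vanishing beyond
`n a`; such functions of bounded support are dense. This is Kitai's criterion: for `x` of bounded
support and `N` large, `y = (1 - S ^ N)⁻¹ x` satisfies `y = x + S ^ N y`, hence `T ^ N y = y`
and `y` is close to `x`. Likewise `T ^ N` maps `x + S ^ N y`, which is close to `x`, onto `y`, so
`T` is topologically transitive, and the Baire category theorem yields a dense orbit.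
-/

open MeasureTheory Filter Set Function Topology TopologicalSpace
open scoped ENNReal

theorem exists_dense_range_iterate_of_transitive {X : Type*} [TopologicalSpace X] [BaireSpace X]
    [SecondCountableTopology X] [Nonempty X] {f : X → X} (hf : Continuous f)
    (htrans : ∀ U V : Set X, IsOpen U → U.Nonempty → IsOpen V → V.Nonempty →
      ∃ n, (U ∩ f^[n] ⁻¹' V).Nonempty) :
    ∃ x, Dense (range fun n => f^[n] x) := by
  obtain ⟨B, hBc, -, hB⟩ := exists_countable_basis X
  let G : {V // V ∈ B ∧ V.Nonempty} → Set X := fun V => ⋃ n, f^[n] ⁻¹' V.1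
  have hG_open : ∀ V, IsOpen (G V) := fun V =>
    isOpen_iUnion fun n => (hB.isOpen V.2.1).preimage (hf.iterate n)
  have hG_dense : ∀ V, Dense (G V) := by
    refine fun V => dense_iff_inter_open.2 fun U hU hUne => ?_
    obtain ⟨n, hn⟩ := htrans U V.1 hU hUne (hB.isOpen V.2.1) V.2.2
    exact hn.mono (inter_subset_inter_right U (subset_iUnion (fun n => f^[n] ⁻¹' V.1) n))
  have : Countable {V // V ∈ B ∧ V.Nonempty} := (hBc.mono fun V hV => hV.1).to_subtype
  obtain ⟨x, hx⟩ := (dense_iInter_of_isOpen hG_open hG_dense).nonempty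
  refine ⟨x, hB.dense_iff.2 fun V hV hVne => ?_⟩
  obtain ⟨n, hn⟩ := mem_iUnion.1 (mem_iInter.1 hx ⟨V, hV, hVne⟩)
  exact ⟨_, hn, n, rfl⟩

section RightInverse

variable {𝕜 X : Type*} [NontriviallyNormedField 𝕜] [NormedAddCommGroup X] [NormedSpace 𝕜 X]
  {T S : X →L[𝕜] X}

theorem norm_pow_apply_le (S : X →L[𝕜] X) (n : ℕ) (y : X) : ‖(S ^ n) y‖ ≤ ‖S‖ ^ n * ‖y‖ := by
  induction n with
  | zero => simp
  | succ n ih =>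
    rw [pow_succ', mul_apply_eq_comp, pow_succ', mul_assoc]
    exact (S.le_opNorm _).trans (by gcongr)

theorem tendsto_pow_apply_nhds_zero (hS : ‖S‖ < 1) (y : X) :
    Tendsto (fun n => (S ^ n) y) atTop (𝓝 0) :=
  squeeze_zero_norm (norm_pow_apply_le S · y) <| by
    simpa using (tendsto_pow_atTop_nhds_zero_of_lt_one (norm_nonneg S) hS).mul_const ‖y‖

theorem pow_apply_add_pow_apply (hTS : T * S = 1) {n : ℕ} {x : X} (hx : (T ^ n) x = 0) (y : X) :
    (T ^ n) (x + (S ^ n) y) = y := by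
  rw [map_add, hx, zero_add, ← mul_apply_eq_comp, pow_mul_pow_eq_one n hTS, one_apply_eq_self]

theorem inverse_one_sub_apply_eq_add [CompleteSpace X] {R : X →L[𝕜] X} (hR : ‖R‖ < 1) (x : X) :
    Ring.inverse (1 - R) x = x + R (Ring.inverse (1 - R) x) := by
  have h := congrArg (· x) (Ring.mul_inverse_cancel _ (Units.oneSub R hR).isUnit)
  simp only [Units.val_oneSub, mul_apply_eq_comp, sub_apply, one_apply_eq_self] at h
  exact eq_add_of_sub_eq h

variable {D : Set X}

theorem dense_periodicPts_of_rightInverse [CompleteSpace X] (hTS : T * S = 1) (hS : ‖S‖ < 1)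
    (hD : Dense D) (hTD : ∀ x ∈ D, ∀ᶠ n in atTop, (T ^ n) x = 0) : Dense (periodicPts T) := by
  refine (hD.mono fun x hx => ?_).of_closure
  set y : ℕ → X := fun N => Ring.inverse (1 - S ^ N) x
  have hSN : ∀ N, 0 < N → ‖S ^ N‖ < 1 := fun N hN =>
    (norm_pow_le' S hN).trans_lt (pow_lt_one₀ (norm_nonneg S) hS hN.ne')
  have hy : ∀ N, 0 < N → y N = x + (S ^ N) (y N) := fun N hN =>
    inverse_one_sub_apply_eq_add (hSN N hN) x
  have hbdd : ∀ N, 0 < N → ‖y N‖ ≤ ‖x‖ / (1 - ‖S‖) := by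
    intro N hN
    have h1 : ‖(S ^ N) (y N)‖ ≤ ‖S‖ * ‖y N‖ := (norm_pow_apply_le S N _).trans <| by
      gcongr; exact pow_le_of_le_one (norm_nonneg S) hS.le hN.ne'
    have h2 : ‖y N‖ ≤ ‖x‖ + ‖S‖ * ‖y N‖ := (hy N hN ▸ norm_add_le _ _).trans (by gcongr)
    rw [le_div_iff₀ (by linarith)]
    linarith
  have hlim : Tendsto y atTop (𝓝 x) := by
    rw [tendsto_iff_norm_sub_tendsto_zero]
    refine squeeze_zero' (Eventually.of_forall fun _ => norm_nonneg _) ?_ (by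
      simpa using (tendsto_pow_atTop_nhds_zero_of_lt_one (norm_nonneg S) hS).mul_const
        (‖x‖ / (1 - ‖S‖)))
    filter_upwards [eventually_gt_atTop 0] with N hN
    calc ‖y N - x‖ = ‖(S ^ N) (y N)‖ := by rw [hy N hN, add_sub_cancel_left, ← hy N hN]
      _ ≤ ‖S‖ ^ N * ‖y N‖ := norm_pow_apply_le S N _
      _ ≤ ‖S‖ ^ N * (‖x‖ / (1 - ‖S‖)) := by gcongr; exact hbdd N hN
  refine mem_closure_of_tendsto hlim ?_
  filter_upwards [hTD x hx, eventually_gt_atTop 0] with N hTN hN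
  refine mk_mem_periodicPts hN ?_
  rw [IsPeriodicPt, IsFixedPt, ← pow_apply_eq_iterate]
  conv_lhs => rw [hy N hN]
  exact pow_apply_add_pow_apply hTS hTN _

theorem exists_inter_iterate_preimage_nonempty_of_rightInverse (hTS : T * S = 1) (hS : ‖S‖ < 1)
    (hD : Dense D) (hTD : ∀ x ∈ D, ∀ᶠ n in atTop, (T ^ n) x = 0) {U V : Set X} (hU : IsOpen U)
    (hUne : U.Nonempty) (hV : IsOpen V) (hVne : V.Nonempty) :
    ∃ n, (U ∩ (⇑T)^[n] ⁻¹' V).Nonempty := by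
  obtain ⟨x, hxU, hxD⟩ := hD.inter_open_nonempty U hU hUne
  obtain ⟨y, hyV, hyD⟩ := hD.inter_open_nonempty V hV hVne
  have hlim : Tendsto (fun n => x + (S ^ n) y) atTop (𝓝 x) := by
    simpa using tendsto_const_nhds.add (tendsto_pow_apply_nhds_zero hS y)
  obtain ⟨n, hnU, hTn⟩ := ((hlim.eventually (hU.mem_nhds hxU)).and (hTD x hxD)).exists
  refine ⟨n, x + (S ^ n) y, hnU, ?_⟩
  rw [mem_preimage, ← pow_apply_eq_iterate, pow_apply_add_pow_apply hTS hTn]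
  exact hyV

end RightInverse

theorem dense_setOf_ae_eq_zero_of_lt {E : Type*} [NormedAddCommGroup E] [NormedSpace ℝ E]
    {p : ℝ≥0∞} [Fact (1 ≤ p)] {μ : Measure ℝ} [μ.Regular] (hp : p ≠ ∞) :
    Dense {y : Lp E p μ | ∃ K, ∀ᵐ t ∂μ, K < t → y t = 0} := by
  refine Metric.dense_iff.2 fun x r hr => ?_
  obtain ⟨g, hg_supp, hg_le, -, hg⟩ := (Lp.memLp x).exists_hasCompactSupport_eLpNorm_sub_le hp
    (ENNReal.ofReal_pos.2 (half_pos hr)).ne'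
  obtain ⟨K, hK⟩ := hg_supp.isCompact.bddAbove
  refine ⟨hg.toLp g, ?_, K, ?_⟩
  · rw [Metric.mem_ball, dist_comm, Lp.dist_def,
      eLpNorm_congr_ae (EventuallyEq.rfl.sub hg.coeFn_toLp)]
    exact (ENNReal.toReal_le_of_le_ofReal (half_pos hr).le hg_le).trans_lt (half_lt_self hr)
  · filter_upwards [hg.coeFn_toLp] with t ht hKt
    rw [ht]
    exact image_eq_zero_of_notMem_tsupport fun h => (hK h).not_gt hKt

local notation "μ₀" => volume.restrict (Ioi (0 : ℝ))

theorem measurePreserving_add_const_restrict_Ioi (b c : ℝ) :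
    MeasurePreserving (· + c) (volume.restrict (Ioi (b - c))) (volume.restrict (Ioi b)) := by
  simpa using (measurePreserving_add_right volume c).restrict_preimage (measurableSet_Ioi (a := b))

theorem measurePreserving_sub_const_restrict_Ioi (a : ℝ) :
    MeasurePreserving (· - a) (volume.restrict (Ioi a)) μ₀ := by
  simpa [← sub_eq_add_neg] using measurePreserving_add_const_restrict_Ioi 0 (-a)

theorem ae_restrict_Ioi_zero_comp_add {a : ℝ} (ha : 0 ≤ a) {P : ℝ → Prop}
    (h : ∀ᵐ t ∂μ₀, P t) : ∀ᵐ t ∂μ₀, P (t + a) :=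
  ae_restrict_of_ae_restrict_of_subset (Ioi_subset_Ioi (by linarith))
    ((measurePreserving_add_const_restrict_Ioi 0 a).quasiMeasurePreserving.ae h)

section WeightedShift

variable {𝕜 : Type*} [RCLike 𝕜] {p : ℝ≥0∞} {a m : ℝ} {w f g : ℝ → 𝕜}

noncomputable def weightedForwardShift (a : ℝ) (w f : ℝ → 𝕜) : ℝ → 𝕜 :=
  (Ioi a).indicator ((f / w) ∘ (· - a))

theorem weightedForwardShift_add (f g : ℝ → 𝕜) :
    weightedForwardShift a w (f + g) = weightedForwardShift a w f + weightedForwardShift a w g := by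
  ext t
  by_cases ht : t ∈ Ioi a <;> simp [weightedForwardShift, ht, add_div]

theorem weightedForwardShift_smul (c : 𝕜) (f : ℝ → 𝕜) :
    weightedForwardShift a w (c • f) = c • weightedForwardShift a w f := by
  ext t
  by_cases ht : t ∈ Ioi a <;> simp [weightedForwardShift, ht, mul_div_assoc]

theorem weightedForwardShift_congr_ae (ha : 0 ≤ a) (h : f =ᵐ[μ₀] g) :
    weightedForwardShift a w f =ᵐ[μ₀] weightedForwardShift a w g := by
  refine (ae_eq_restrict_iff_indicator_ae_eq measurableSet_Ioi).1 ?_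
  rw [Measure.restrict_restrict_of_subset (Ioi_subset_Ioi ha)]
  exact (measurePreserving_sub_const_restrict_Ioi a).quasiMeasurePreserving.ae_eq_comp
    (h.div EventuallyEq.rfl)

theorem eLpNorm_weightedForwardShift (ha : 0 ≤ a) (hf : AEStronglyMeasurable (f / w) μ₀) :
    eLpNorm (weightedForwardShift a w f) p μ₀ = eLpNorm (f / w) p μ₀ := by
  rw [weightedForwardShift, eLpNorm_indicator_eq_eLpNorm_restrict measurableSet_Ioi,
    Measure.restrict_restrict_of_subset (Ioi_subset_Ioi ha),
    eLpNorm_comp_measurePreserving hf (measurePreserving_sub_const_restrict_Ioi a)]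

theorem memLp_weightedForwardShift (ha : 0 ≤ a) (hf : MemLp (f / w) p μ₀) :
    MemLp (weightedForwardShift a w f) p μ₀ := by
  refine ⟨?_, by rw [eLpNorm_weightedForwardShift ha hf.1]; exact hf.2⟩
  rw [weightedForwardShift, aestronglyMeasurable_indicator_iff measurableSet_Ioi,
    Measure.restrict_restrict_of_subset (Ioi_subset_Ioi ha)]
  exact hf.1.comp_measurePreserving (measurePreserving_sub_const_restrict_Ioi a)

theorem ae_norm_div_le (hm : 0 < m) (hwm : ∀ t : ℝ, 0 < t → m ≤ ‖w t‖) (f : ℝ → 𝕜) :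
    ∀ᵐ t ∂μ₀, ‖(f / w) t‖ ≤ m⁻¹ * ‖f t‖ := by
  filter_upwards [ae_restrict_mem measurableSet_Ioi] with t ht
  rw [Pi.div_apply, norm_div, div_eq_inv_mul]
  gcongr
  exact hwm t ht

theorem memLp_div (hm : 0 < m) (hwm : ∀ t : ℝ, 0 < t → m ≤ ‖w t‖)
    (hw : AEStronglyMeasurable w μ₀) (hf : MemLp f p μ₀) : MemLp (f / w) p μ₀ :=
  hf.of_le_mul (hf.1.aemeasurable.div hw.aemeasurable).aestronglyMeasurable
    (ae_norm_div_le hm hwm f)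

theorem exists_clm_coeFn_eq_weightedForwardShift [Fact (1 ≤ p)] (ha : 0 ≤ a) (hm : 0 < m)
    (hwm : ∀ t : ℝ, 0 < t → m ≤ ‖w t‖) (hw : AEStronglyMeasurable w μ₀) :
    ∃ S : Lp 𝕜 p μ₀ →L[𝕜] Lp 𝕜 p μ₀,
      ‖S‖ ≤ m⁻¹ ∧ ∀ z, ⇑(S z) =ᵐ[μ₀] weightedForwardShift a w z := by
  have hdiv (z : Lp 𝕜 p μ₀) : MemLp (⇑z / w) p μ₀ := memLp_div hm hwm hw (Lp.memLp z)
  have hmem (z : Lp 𝕜 p μ₀) := memLp_weightedForwardShift ha (hdiv z)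
  let S : Lp 𝕜 p μ₀ →ₗ[𝕜] Lp 𝕜 p μ₀ :=
    { toFun z := (hmem z).toLp _
      map_add' z₁ z₂ := by
        rw [← MemLp.toLp_add]
        refine MemLp.toLp_congr _ _ ?_
        rw [← weightedForwardShift_add]
        exact weightedForwardShift_congr_ae ha (Lp.coeFn_add z₁ z₂)
      map_smul' c z := by
        rw [RingHom.id_apply, ← MemLp.toLp_const_smul]
        refine MemLp.toLp_congr _ _ ?_
        rw [← weightedForwardShift_smul]
        exact weightedForwardShift_congr_ae ha (Lp.coeFn_smul c z) }
  have hS (z : Lp 𝕜 p μ₀) : ‖S z‖ ≤ m⁻¹ * ‖z‖ := by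
    calc ‖S z‖ = ‖(hdiv z).toLp _‖ := by
          simp only [S, LinearMap.coe_mk, AddHom.coe_mk, Lp.norm_toLp,
            eLpNorm_weightedForwardShift ha (hdiv z).1]
      _ ≤ m⁻¹ * ‖z‖ := Lp.norm_le_mul_norm_of_ae_le_mul <| by
          filter_upwards [(hdiv z).coeFn_toLp, ae_norm_div_le hm hwm z] with t ht h
          rwa [ht]
  exact ⟨S.mkContinuous m⁻¹ hS, S.mkContinuous_norm_le (inv_nonneg.2 hm.le) hS,
    fun z => (hmem z).coeFn_toLp⟩

end WeightedShift

section WeightedBackwardShift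

variable {𝕜 : Type*} [RCLike 𝕜] {p : ℝ≥0∞} [Fact (1 ≤ p)] {a m : ℝ} {w : ℝ → 𝕜}
  {T : Lp 𝕜 p μ₀ →L[𝕜] Lp 𝕜 p μ₀}

theorem exists_rightInverse_norm_lt_one (ha : 0 ≤ a) (hm : 1 < m)
    (hwm : ∀ t : ℝ, 0 < t → m ≤ ‖w t‖) (hw : AEStronglyMeasurable w μ₀)
    (hT : ∀ x : Lp 𝕜 p μ₀, ⇑(T x) =ᵐ[μ₀] fun t => w t * x (t + a)) :
    ∃ S : Lp 𝕜 p μ₀ →L[𝕜] Lp 𝕜 p μ₀, T * S = 1 ∧ ‖S‖ < 1 := by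
  have hm₀ : 0 < m := zero_lt_one.trans hm
  obtain ⟨S, hS_norm, hS⟩ := exists_clm_coeFn_eq_weightedForwardShift (p := p) ha hm₀ hwm hw
  refine ⟨S, ContinuousLinearMap.ext fun z => Lp.ext ?_,
    hS_norm.trans_lt (inv_lt_one_of_one_lt₀ hm)⟩
  rw [mul_apply_eq_comp, one_apply_eq_self]
  filter_upwards [hT (S z), ae_restrict_Ioi_zero_comp_add ha (hS z),
    ae_restrict_mem measurableSet_Ioi] with t hTt hSt ht
  have hwt : w t ≠ 0 := norm_pos_iff.1 (hm₀.trans_le (hwm t ht))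
  rw [hTt, hSt, weightedForwardShift, indicator_of_mem (by simpa using ht : t + a ∈ Ioi a)]
  simp [mul_div_cancel₀ _ hwt]

theorem ae_apply_eq_zero_of_lt (ha : 0 ≤ a)
    (hT : ∀ x : Lp 𝕜 p μ₀, ⇑(T x) =ᵐ[μ₀] fun t => w t * x (t + a)) {K : ℝ} {y : Lp 𝕜 p μ₀}
    (hy : ∀ᵐ t ∂μ₀, K < t → y t = 0) : ∀ᵐ t ∂μ₀, K - a < t → T y t = 0 := by
  filter_upwards [hT y, ae_restrict_Ioi_zero_comp_add ha hy] with t hTt hyt hKt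
  rw [hTt, hyt (by linarith), mul_zero]

theorem pow_apply_eq_zero (ha : 0 ≤ a)
    (hT : ∀ x : Lp 𝕜 p μ₀, ⇑(T x) =ᵐ[μ₀] fun t => w t * x (t + a)) (n : ℕ) {y : Lp 𝕜 p μ₀}
    (hy : ∀ᵐ t ∂μ₀, n * a < t → y t = 0) : (T ^ n) y = 0 := by
  induction n generalizing y with
  | zero =>
    rw [pow_zero, one_apply_eq_self, Lp.eq_zero_iff_ae_eq_zero]
    filter_upwards [hy, ae_restrict_mem measurableSet_Ioi] with t hyt ht
    exact hyt (by simpa using ht)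
  | succ n ih =>
    rw [pow_succ, mul_apply_eq_comp]
    exact ih (by simpa [add_mul] using ae_apply_eq_zero_of_lt ha hT hy)

theorem eventually_pow_apply_eq_zero (ha : 0 < a)
    (hT : ∀ x : Lp 𝕜 p μ₀, ⇑(T x) =ᵐ[μ₀] fun t => w t * x (t + a)) {y : Lp 𝕜 p μ₀}
    (hy : ∃ K, ∀ᵐ t ∂μ₀, K < t → y t = 0) : ∀ᶠ n in atTop, (T ^ n) y = 0 := by
  obtain ⟨K, hK⟩ := hy
  filter_upwards [(tendsto_natCast_atTop_atTop.atTop_mul_const ha).eventually_ge_atTop K]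
    with n hn
  exact pow_apply_eq_zero ha.le hT n (hK.mono fun t h ht => h (hn.trans_lt ht))

end WeightedBackwardShift

theorem stmt2_general (p : ENNReal) [Fact (1 ≤ p)] (hp : p ≠ ⊤) (a : ℝ) (ha : 0 < a)
    (w : ℝ → ℂ) (m : ℝ) (hm : 1 < m) (hwm : ∀ t : ℝ, 0 < t → m ≤ ‖w t‖)
    (hw : AEStronglyMeasurable w (volume.restrict (Set.Ioi (0:ℝ))))
    (T : Lp ℂ p (volume.restrict (Set.Ioi (0:ℝ))) →L[ℂ]
         Lp ℂ p (volume.restrict (Set.Ioi (0:ℝ))))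
    (hT : ∀ x : Lp ℂ p (volume.restrict (Set.Ioi (0:ℝ))),
      (T x : ℝ → ℂ) =ᵐ[volume.restrict (Set.Ioi (0:ℝ))] fun t => w t * x (t + a)) :
    Dense {x : Lp ℂ p (volume.restrict (Set.Ioi (0:ℝ))) |
        ∃ N : ℕ, 0 < N ∧ (T ^ N) x = x} ∧
      ∃ x : Lp ℂ p (volume.restrict (Set.Ioi (0:ℝ))),
        Dense (Set.range fun n : ℕ => (T ^ n) x) := by
  obtain ⟨S, hTS, hS⟩ := exists_rightInverse_norm_lt_one ha.le hm hwm hw hT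
  have hD := dense_setOf_ae_eq_zero_of_lt (E := ℂ) (μ := μ₀) hp
  have hTD : ∀ y ∈ {y : Lp ℂ p μ₀ | ∃ K, ∀ᵐ t ∂μ₀, K < t → y t = 0},
      ∀ᶠ n in atTop, (T ^ n) y = 0 := fun y hy => eventually_pow_apply_eq_zero ha hT hy
  refine ⟨?_, ?_⟩
  · simpa only [periodicPts, IsPeriodicPt, IsFixedPt, pow_apply_eq_iterate, gt_iff_lt]
      using dense_periodicPts_of_rightInverse hTS hS hD hTD
  · have : Fact (p ≠ ⊤) := ⟨hp⟩
    obtain ⟨x, hx⟩ := exists_dense_range_iterate_of_transitive T.continuous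
      fun U V hU hUne hV hVne =>
        exists_inter_iterate_preimage_nonempty_of_rightInverse hTS hS hD hTD hU hUne hV hVne
    exact ⟨x, by simpa only [pow_apply_eq_iterate] using hx⟩

/-- with `|w(t)| ≥ m > 1` and `w` bounded, the set of periodic points
of `T` is dense in `L^p(0,∞)`, and consequently `T` is chaotic (hypercyclic with
a dense set of periodic points). -/
theorem stmt2 (p : ENNReal) [Fact (1 ≤ p)] (hp : p ≠ ⊤) (a : ℝ) (ha : 0 < a)
    (w : ℝ → ℂ) (m C : ℝ) (hm : 1 < m) (hwm : ∀ t : ℝ, 0 < t → m ≤ ‖w t‖)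
    (hwC : ∀ t : ℝ, 0 < t → ‖w t‖ ≤ C)
    (hw : AEStronglyMeasurable w (volume.restrict (Set.Ioi (0:ℝ))))
    (T : Lp ℂ p (volume.restrict (Set.Ioi (0:ℝ))) →L[ℂ]
         Lp ℂ p (volume.restrict (Set.Ioi (0:ℝ))))
    (hT : ∀ x : Lp ℂ p (volume.restrict (Set.Ioi (0:ℝ))),
      (T x : ℝ → ℂ) =ᵐ[volume.restrict (Set.Ioi (0:ℝ))] fun t => w t * x (t + a)) :
    Dense {x : Lp ℂ p (volume.restrict (Set.Ioi (0:ℝ))) |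
        ∃ N : ℕ, 0 < N ∧ (T ^ N) x = x} ∧
      ∃ x : Lp ℂ p (volume.restrict (Set.Ioi (0:ℝ))),
        Dense (Set.range fun n : ℕ => (T ^ n) x) :=
  stmt2_general p hp a ha w m hm hwm hw T hT
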